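/- Let N, N̄, M be positive integers, K ≥ N and K̄ ≥ N̄ integers, ħ a nonzero real number, ν a nonzero complex number, and let a_1,…,a_M ∈ ℂ and nonzero p_1,…,p_M, q_1,…,q_M ∈ ℂ satisfy p_i ≠ q_j and q_i ≠ p_j for i ≠ j, together with p_i^N + p_i^{−N̄} − ν·Log p_i = q_i^N + q_i^{−N̄} − ν·Log q_i for every i. For (s,t,t̄) ∈ ℝ × ℝ^K × ℝ^{K̄} define e_i(s,t,t̄) = exp(ħ⁻¹((Log p_i − Log q_i)·s + Σ_{k=1}^K (p_i^k − q_i^k)·t_k + Σ_{k=1}^{K̄} (p_i^{−k} − q_i^{−k})·t̄_k)), c_{ij} = ((p_i−p_j)(q_i−q_j))/((p_i−q_j)(q_i−p_j)), and τ(s,t,t̄) = Σ_{I ⊆ {1,…,M}} (Π_{i∈I} a_i)·(Π_{i<j, i,j∈I} c_{ij})·Π_{i∈I} e_i(s,t,t̄). Then τ satisfies ∂τ/∂t_N + ∂τ/∂t̄_{N̄} − ν·∂τ/∂s = 0 identically on ℝ × ℝ^K × ℝ^{K̄}. -/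

import Mathlib

/-!
Each factor `e i` is the exponential of a linear form in `(s, t, t̄)`, so differentiating a
summand `w I * ∏ i ∈ I, e i` in any time direction multiplies it by the sum over `i ∈ I` of the
rates of that direction. The reduction condition says exactly that the rates of
`∂/∂t_N + ∂/∂t̄_{N̄} − ν ∂/∂s` cancel for each `i`, hence in every summand.
-/

open Finset Function

lemma hasDerivAt_sum_mul_update {ι : Type*} [Fintype ι] [DecidableEq ι]
    (P : ι → ℂ) (t : ι → ℝ) (n : ι) (x : ℝ) :
    HasDerivAt (fun y : ℝ => ∑ k, P k * (update t n y k : ℂ)) (P n) x := by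
  have hterm (k : ι) : HasDerivAt (fun y : ℝ => P k * (update t n y k : ℂ))
      (if k = n then P k else 0) x := by
    by_cases hk : k = n
    · subst hk
      simpa using (Complex.ofRealCLM.hasDerivAt (x := x)).const_mul (P k)
    · simpa [hk, update_of_ne hk] using hasDerivAt_const x (P k * (t k : ℂ))
  simpa using HasDerivAt.fun_sum fun k (_ : k ∈ univ) => hterm k

lemma HasDerivAt.finsetProd_of_logDeriv {ι : Type*} [DecidableEq ι] {f : ι → ℝ → ℂ}
    {B : ι → ℂ} {x : ℝ} (hf : ∀ i, HasDerivAt (f i) (B i * f i x) x) (I : Finset ι) :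
    HasDerivAt (fun y => ∏ i ∈ I, f i y) ((∑ i ∈ I, B i) * ∏ i ∈ I, f i x) x := by
  refine (HasDerivAt.fun_finsetProd (u := I) fun i _ => hf i).congr_deriv ?_
  rw [sum_mul]
  refine sum_congr rfl fun i hi => ?_
  rw [smul_eq_mul, ← mul_prod_erase I _ hi]
  ring

lemma HasDerivAt.sum_mul_prod_of_logDeriv {ι : Type*} [Fintype ι] [DecidableEq ι]
    {f : ι → ℝ → ℂ} {B : ι → ℂ} {x : ℝ} (hf : ∀ i, HasDerivAt (f i) (B i * f i x) x)
    (w : Finset ι → ℂ) :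
    HasDerivAt (fun y => ∑ I : Finset ι, w I * ∏ i ∈ I, f i y)
      (∑ I : Finset ι, w I * ((∑ i ∈ I, B i) * ∏ i ∈ I, f i x)) x :=
  HasDerivAt.fun_sum fun I _ => (HasDerivAt.finsetProd_of_logDeriv hf I).const_mul (w I)

section SolitonExp

variable {ι κ : Type*} [Fintype ι] [Fintype κ]

noncomputable def solitonExp (c l : ℂ) (P : ι → ℂ) (Q : κ → ℂ) (s : ℝ) (t : ι → ℝ)
    (tb : κ → ℝ) : ℂ :=
  Complex.exp (c * (l * s + ∑ k, P k * (t k : ℂ) + ∑ k, Q k * (tb k : ℂ)))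

variable (c l : ℂ) (P : ι → ℂ) (Q : κ → ℂ) (s : ℝ) (t : ι → ℝ) (tb : κ → ℝ)

lemma hasDerivAt_solitonExp_s :
    HasDerivAt (fun x => solitonExp c l P Q x t tb) (c * l * solitonExp c l P Q s t tb) s := by
  have harg := ((((Complex.ofRealCLM.hasDerivAt (x := s)).const_mul l).add_const
    (∑ k, P k * (t k : ℂ))).add_const (∑ k, Q k * (tb k : ℂ))).const_mul c
  refine harg.cexp.congr_deriv ?_
  simp only [solitonExp, Complex.ofRealCLM_apply, Complex.ofReal_one, mul_one]
  ring

lemma hasDerivAt_solitonExp_t [DecidableEq ι] (n : ι) (x : ℝ) :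
    HasDerivAt (fun y => solitonExp c l P Q s (update t n y) tb)
      (c * P n * solitonExp c l P Q s (update t n x) tb) x := by
  have harg := ((((hasDerivAt_sum_mul_update P t n x).const_add (l * s)).add_const
    (∑ k, Q k * (tb k : ℂ))).const_mul c)
  refine harg.cexp.congr_deriv ?_
  simp only [solitonExp]
  ring

lemma hasDerivAt_solitonExp_tb [DecidableEq κ] (n : κ) (x : ℝ) :
    HasDerivAt (fun y => solitonExp c l P Q s t (update tb n y))
      (c * Q n * solitonExp c l P Q s t (update tb n x)) x := by
  have harg := (((hasDerivAt_sum_mul_update Q tb n x).const_add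
    (l * s + ∑ k, P k * (t k : ℂ))).const_mul c)
  refine harg.cexp.congr_deriv ?_
  simp only [solitonExp]
  ring

end SolitonExp

lemma sum_mul_sum_mul_add_sub_eq_zero {ι : Type*} [Fintype ι] (w E : Finset ι → ℂ)
    {B₁ B₂ B₃ : ι → ℂ} (ν : ℂ) (h : ∀ i, B₁ i + B₂ i - ν * B₃ i = 0) :
    ∑ I : Finset ι, w I * ((∑ i ∈ I, B₁ i) * E I)
      + ∑ I : Finset ι, w I * ((∑ i ∈ I, B₂ i) * E I)
      - ν * ∑ I : Finset ι, w I * ((∑ i ∈ I, B₃ i) * E I) = 0 := by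
  rw [mul_sum, ← sum_add_distrib, ← sum_sub_distrib]
  refine sum_eq_zero fun I _ => ?_
  have hI : ∑ i ∈ I, B₁ i + ∑ i ∈ I, B₂ i - ν * ∑ i ∈ I, B₃ i = 0 := by
    rw [mul_sum, ← sum_add_distrib, ← sum_sub_distrib]
    exact sum_eq_zero fun i _ => h i
  linear_combination w I * E I * hI

/-- The M-soliton tau function of the 2D Toda hierarchy (time
variables truncated to `t_1,…,t_K` and `t̄_1,…,t̄_{K̄}`) satisfies the reduction
condition `∂τ/∂t_N + ∂τ/∂t̄_{N̄} − ν·∂τ/∂s = 0` of the equivariant bigraded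
Toda hierarchy of type `(N, N̄)` when the parameters satisfy
`p_i^N + p_i^{−N̄} − ν·Log p_i = q_i^N + q_i^{−N̄} − ν·Log q_i`. -/
theorem stmt_9 (N Nb M K Kb : ℕ) (hN : 0 < N) (hNb : 0 < Nb)
    (hNK : N ≤ K) (hNbKb : Nb ≤ Kb)
    (hbar : ℝ) (ν : ℂ)
    (a p q : Fin M → ℂ)
    (hred : ∀ i, p i ^ N + p i ^ (-(Nb : ℤ)) - ν * Complex.log (p i)
              = q i ^ N + q i ^ (-(Nb : ℤ)) - ν * Complex.log (q i))
    (e : Fin M → ℝ → (Fin K → ℝ) → (Fin Kb → ℝ) → ℂ)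
    (he : ∀ i s t tb, e i s t tb = Complex.exp ((hbar : ℂ)⁻¹ *
      ((Complex.log (p i) - Complex.log (q i)) * (s : ℂ) +
       (∑ k : Fin K, (p i ^ (k.val + 1) - q i ^ (k.val + 1)) * (t k : ℂ)) +
       ∑ k : Fin Kb,
         (p i ^ (-((k.val : ℤ) + 1)) - q i ^ (-((k.val : ℤ) + 1))) * (tb k : ℂ))))
    (c : Fin M → Fin M → ℂ)
    (τ : ℝ → (Fin K → ℝ) → (Fin Kb → ℝ) → ℂ)
    (hτ : ∀ s t tb, τ s t tb = ∑ I : Finset (Fin M),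
      (∏ i ∈ I, a i) * (∏ i ∈ I, ∏ j ∈ I, if i < j then c i j else 1) *
        ∏ i ∈ I, e i s t tb) :
    ∀ (s : ℝ) (t : Fin K → ℝ) (tb : Fin Kb → ℝ),
      deriv (fun x : ℝ => τ s (Function.update t ⟨N - 1, by omega⟩ x) tb)
          (t ⟨N - 1, by omega⟩)
        + deriv (fun x : ℝ => τ s t (Function.update tb ⟨Nb - 1, by omega⟩ x))
            (tb ⟨Nb - 1, by omega⟩)
        - ν * deriv (fun x : ℝ => τ x t tb) s = 0 := by
  intro s t tb
  set L : Fin M → ℂ := fun i => Complex.log (p i) - Complex.log (q i)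
  set P : Fin M → Fin K → ℂ := fun i k => p i ^ (k.val + 1) - q i ^ (k.val + 1)
  set Q : Fin M → Fin Kb → ℂ := fun i k =>
    p i ^ (-((k.val : ℤ) + 1)) - q i ^ (-((k.val : ℤ) + 1))
  set w : Finset (Fin M) → ℂ := fun I =>
    (∏ i ∈ I, a i) * ∏ i ∈ I, ∏ j ∈ I, if i < j then c i j else 1
  obtain rfl : e = fun i => solitonExp (hbar : ℂ)⁻¹ (L i) (P i) (Q i) := by
    funext i s t tb; exact he i s t tb
  obtain rfl : τ = fun s t tb =>
      ∑ I, w I * ∏ i ∈ I, solitonExp (hbar : ℂ)⁻¹ (L i) (P i) (Q i) s t tb := by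
    funext s t tb; exact hτ s t tb
  have hDt := fun i => hasDerivAt_solitonExp_t (hbar : ℂ)⁻¹ (L i) (P i) (Q i) s t tb
    ⟨N - 1, by omega⟩ (t ⟨N - 1, by omega⟩)
  have hDtb := fun i => hasDerivAt_solitonExp_tb (hbar : ℂ)⁻¹ (L i) (P i) (Q i) s t tb
    ⟨Nb - 1, by omega⟩ (tb ⟨Nb - 1, by omega⟩)
  have hDs := fun i => hasDerivAt_solitonExp_s (hbar : ℂ)⁻¹ (L i) (P i) (Q i) s t tb
  rw [(HasDerivAt.sum_mul_prod_of_logDeriv hDt w).deriv,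
    (HasDerivAt.sum_mul_prod_of_logDeriv hDtb w).deriv,
    (HasDerivAt.sum_mul_prod_of_logDeriv hDs w).deriv]
  simp only [update_eq_self]
  refine sum_mul_sum_mul_add_sub_eq_zero w _ ν fun i => ?_
  have hN' : N - 1 + 1 = N := Nat.sub_add_cancel hN
  have hNb' : -(((Nb - 1 : ℕ) : ℤ) + 1) = -(Nb : ℤ) := by omega
  simp only [P, Q, L, hN', hNb']
  linear_combination (hbar : ℂ)⁻¹ * hred i
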